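/- In the NATS M1, the USL sentence ψ8 := ⟨⟨x_1⟩⟩(a,x_1)□⟨⟨x_2⟩⟩(a,x_2)∘p is false at state s_0 (agent a cannot achieve p more than once, so her capability to reach p is not sustainable). -/

import Mathlib

namespace USL

attribute [local instance] Classical.propDecidable

/-- A Non-deterministic Alternating Transition System (NATS). -/
structure NATS (Ag St At : Type) where
  v : St → Set At
  Ch : Ag → St → Set (Set St)
  Ch_nonempty : ∀ a s, (Ch a s).Nonempty
  Ch_inter : ∀ a₁ a₂ : Ag, a₁ ≠ a₂ → ∀ s : St,
    ∀ c₁ ∈ Ch a₁ s, ∀ c₂ ∈ Ch a₂ s, (c₁ ∩ c₂).Nonempty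

variable {Ag St At X : Type}

/-- A strategy, represented on tracks given as (history, current state). -/
structure NATS.Strategy (M : NATS Ag St At) where
  f : Ag → List St → St → Set St
  valid : ∀ a h s, f a h s ∈ M.Ch a s

/-- Translation σ^τ of a strategy by a track prefix τ. -/
def NATS.Strategy.shift {M : NATS Ag St At} (σ : M.Strategy) (τ : List St) : M.Strategy :=
  ⟨fun a h s => σ.f a (τ ++ h) s, fun a h s => σ.valid a (τ ++ h) s⟩

/-- A (partial) assignment of strategies to variables. -/
def NATS.Assignment (M : NATS Ag St At) (X : Type) : Type := X → Option M.Strategy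

def NATS.Assignment.shift {M : NATS Ag St At} (μ : M.Assignment X) (τ : List St) :
    M.Assignment X :=
  fun x => (μ x).map (fun σ => σ.shift τ)

/-- A commitment: a finite sequence over P(Ag) × X; the head is the most recent binding. -/
abbrev Commitment (Ag X : Type) := List (Set Ag × X)

/-- The choice induced by a single binding (A, x). -/
noncomputable def bindChoice {M : NATS Ag St At} (μ : M.Assignment X) (A : Set Ag) (x : X)
    (h : List St) (s : St) : Set St :=
  match μ x with
  | some σ => if A.Nonempty then ⋂ a ∈ A, σ.f a h s else Set.univ
  | none => Set.univ

/-- The function from tracks to sets of states induced by a context (μ, κ);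
    older bindings (towards the tail) have priority. -/
noncomputable def ctxFun {M : NATS Ag St At} (μ : M.Assignment X) :
    Commitment Ag X → List St → St → Set St
  | [] => fun _ _ => Set.univ
  | (A, x) :: κ => fun h s =>
      let r := ctxFun μ κ h s
      if (r ∩ bindChoice μ A x h s).Nonempty then r ∩ bindChoice μ A x h s else r

/-- One step of the transition relation of a NATS. -/
def NATS.Step (M : NATS Ag St At) (s s' : St) : Prop := ∀ a : Ag, ∃ c ∈ M.Ch a s, s' ∈ c

/-- A path: an infinite sequence of states all of whose finite prefixes are tracks. -/
def NATS.IsPath (M : NATS Ag St At) (lam : ℕ → St) : Prop := ∀ n, M.Step (lam n) (lam (n + 1))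

/-- The history λ_0 … λ_{n-1}. -/
def histOf (lam : ℕ → St) (n : ℕ) : List St := (List.range n).map lam

/-- The outcomes of a context (μ, κ) from a state s. -/
def outcomes (M : NATS Ag St At) (μ : M.Assignment X) (κ : Commitment Ag X) (s : St) :
    Set (ℕ → St) :=
  {lam | M.IsPath lam ∧ lam 0 = s ∧ ∀ n, lam (n + 1) ∈ ctxFun μ κ (histOf lam n) (lam n)}

mutual
/-- USL state formulas. -/
inductive StateForm (Ag At X : Type) : Type where
  | atom (p : At)
  | snot (φ : StateForm Ag At X)
  | sand (φ₁ φ₂ : StateForm Ag At X)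
  | exq (x : X) (φ : StateForm Ag At X)
  | bind (A : Set Ag) (x : X) (ψ : PathForm Ag At X)
  | unbind (A : Set Ag) (x : X) (ψ : PathForm Ag At X)
/-- USL path formulas. -/
inductive PathForm (Ag At X : Type) : Type where
  | ofState (φ : StateForm Ag At X)
  | pnot (ψ : PathForm Ag At X)
  | pand (ψ₁ ψ₂ : PathForm Ag At X)
  | puntil (ψ₁ ψ₂ : PathForm Ag At X)
  | pnext (ψ : PathForm Ag At X)
end

/-- The commitment κ[A ↛ x]: every pair (B, x) is replaced by (B ∖ A, x). -/
noncomputable def unbindCom (A : Set Ag) (x : X) (κ : Commitment Ag X) : Commitment Ag X :=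
  κ.map (fun e => if e.2 = x then (e.1 \ A, e.2) else e)

mutual
/-- USL satisfaction, state formulas. -/
def SatS (M : NATS Ag St At) (μ : M.Assignment X) (κ : Commitment Ag X) (s : St) :
    StateForm Ag At X → Prop
  | .atom p => p ∈ M.v s
  | .snot φ => ¬ SatS M μ κ s φ
  | .sand φ₁ φ₂ => SatS M μ κ s φ₁ ∧ SatS M μ κ s φ₂
  | .exq x φ => ∃ σ : M.Strategy, SatS M (Function.update μ x (some σ)) κ s φ
  | .bind A x ψ => ∀ lam ∈ outcomes M μ ((A, x) :: κ) s, SatP M μ ((A, x) :: κ) lam ψ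
  | .unbind A x ψ =>
      ∀ lam ∈ outcomes M μ (unbindCom A x κ) s, SatP M μ (unbindCom A x κ) lam ψ
/-- USL satisfaction, path formulas. -/
def SatP (M : NATS Ag St At) (μ : M.Assignment X) (κ : Commitment Ag X) (lam : ℕ → St) :
    PathForm Ag At X → Prop
  | .ofState φ => SatS M μ κ (lam 0) φ
  | .pnot ψ => ¬ SatP M μ κ lam ψ
  | .pand ψ₁ ψ₂ => SatP M μ κ lam ψ₁ ∧ SatP M μ κ lam ψ₂
  | .puntil ψ₁ ψ₂ => ∃ i : ℕ,
      SatP M (μ.shift (histOf lam i)) κ (fun n => lam (n + i)) ψ₂ ∧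
      ∀ j < i, SatP M (μ.shift (histOf lam j)) κ (fun n => lam (n + j)) ψ₁
  | .pnext ψ => SatP M (μ.shift [lam 0]) κ (fun n => lam (n + 1)) ψ
end

/-- The empty assignment. -/
def emptyAsg (M : NATS Ag St At) (X : Type) : M.Assignment X := fun _ => none

/-- Truth of a USL sentence at a state: empty assignment and empty commitment. -/
def USLTrue (M : NATS Ag St At) (s : St) (φ : StateForm Ag At X) : Prop :=
  SatS M (emptyAsg M X) [] s φ

mutual
/-- Free variables of a state formula. -/
def freeS : StateForm Ag At X → Set X
  | .atom _ => ∅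
  | .snot φ => freeS φ
  | .sand φ₁ φ₂ => freeS φ₁ ∪ freeS φ₂
  | .exq x φ => freeS φ \ {x}
  | .bind _ x ψ => freeP ψ ∪ {x}
  | .unbind _ x ψ => freeP ψ ∪ {x}
/-- Free variables of a path formula. -/
def freeP : PathForm Ag At X → Set X
  | .ofState φ => freeS φ
  | .pnot ψ => freeP ψ
  | .pand ψ₁ ψ₂ => freeP ψ₁ ∪ freeP ψ₂
  | .puntil ψ₁ ψ₂ => freeP ψ₁ ∪ freeP ψ₂
  | .pnext ψ => freeP ψ
end

/-- A sentence: a formula with no free variable. -/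
def StateForm.IsSentence (φ : StateForm Ag At X) : Prop := freeS φ = ∅

mutual
/-- SL formulas: USL formulas with no unbinder whose binders bind single agents. -/
def IsSLS : StateForm Ag At X → Prop
  | .atom _ => True
  | .snot φ => IsSLS φ
  | .sand φ₁ φ₂ => IsSLS φ₁ ∧ IsSLS φ₂
  | .exq _ φ => IsSLS φ
  | .bind A _ ψ => (∃ a : Ag, A = {a}) ∧ IsSLP ψ
  | .unbind _ _ _ => False
def IsSLP : PathForm Ag At X → Prop
  | .ofState φ => IsSLS φ
  | .pnot ψ => IsSLP ψ
  | .pand ψ₁ ψ₂ => IsSLP ψ₁ ∧ IsSLP ψ₂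
  | .puntil ψ₁ ψ₂ => IsSLP ψ₁ ∧ IsSLP ψ₂
  | .pnext ψ => IsSLP ψ
end

/-- The commitment κ* used by the generalized SL binder: every pair (A, y) is replaced
    by (A, x); if there is no such pair, (A, x) is appended as the most recent binding. -/
noncomputable def slRebind (A : Set Ag) (x : X) (κ : Commitment Ag X) : Commitment Ag X :=
  if ∃ e ∈ κ, e.1 = A then κ.map (fun e => if e.1 = A then (A, x) else e) else (A, x) :: κ

mutual
/-- Generalized SL satisfaction over NATS, state formulas: as USL except the binder
    clause, where binding revokes the agent's previously bound strategies. -/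
def SatSLS (M : NATS Ag St At) (μ : M.Assignment X) (κ : Commitment Ag X) (s : St) :
    StateForm Ag At X → Prop
  | .atom p => p ∈ M.v s
  | .snot φ => ¬ SatSLS M μ κ s φ
  | .sand φ₁ φ₂ => SatSLS M μ κ s φ₁ ∧ SatSLS M μ κ s φ₂
  | .exq x φ => ∃ σ : M.Strategy, SatSLS M (Function.update μ x (some σ)) κ s φ
  | .bind A x ψ =>
      ∀ lam ∈ outcomes M μ (slRebind A x κ) s, SatSLP M μ (slRebind A x κ) lam ψ
  | .unbind A x ψ =>
      ∀ lam ∈ outcomes M μ (unbindCom A x κ) s, SatSLP M μ (unbindCom A x κ) lam ψ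
/-- Generalized SL satisfaction over NATS, path formulas. -/
def SatSLP (M : NATS Ag St At) (μ : M.Assignment X) (κ : Commitment Ag X) (lam : ℕ → St) :
    PathForm Ag At X → Prop
  | .ofState φ => SatSLS M μ κ (lam 0) φ
  | .pnot ψ => ¬ SatSLP M μ κ lam ψ
  | .pand ψ₁ ψ₂ => SatSLP M μ κ lam ψ₁ ∧ SatSLP M μ κ lam ψ₂
  | .puntil ψ₁ ψ₂ => ∃ i : ℕ,
      SatSLP M (μ.shift (histOf lam i)) κ (fun n => lam (n + i)) ψ₂ ∧
      ∀ j < i, SatSLP M (μ.shift (histOf lam j)) κ (fun n => lam (n + j)) ψ₁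
  | .pnext ψ => SatSLP M (μ.shift [lam 0]) κ (fun n => lam (n + 1)) ψ
end

/-- Truth of an SL sentence at a state under the generalized SL semantics. -/
def SLTrue (M : NATS Ag St At) (s : St) (φ : StateForm Ag At X) : Prop :=
  SatSLS M (emptyAsg M X) [] s φ

/-- A NATS is deterministic if any selection of one choice per agent intersects
    in a singleton. -/
def NATS.Deterministic (M : NATS Ag St At) : Prop :=
  ∀ (s : St) (c : Ag → Set St), (∀ a, c a ∈ M.Ch a s) → ∃ t : St, (⋂ a, c a) = {t}
/-- The tautology ⊤ (built from the atom p by state-level connectives). -/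
def pTop (p : At) : PathForm Ag At X :=
  .ofState (.snot (.sand (.atom p) (.snot (.atom p))))

/-- □ψ abbreviates ¬(⊤ U ¬ψ). -/
def Box (p : At) (ψ : PathForm Ag At X) : PathForm Ag At X :=
  .pnot (.puntil (pTop p) (.pnot ψ))

/-- ψ9 := ⟨⟨x⟩⟩(a,x)□(⟨⟨x₀⟩⟩(a,x₀)∘p ∧ ⟨⟨x₀⟩⟩(a,x₀)∘¬p). -/
def psi9 (a : Ag) (p : At) (x x₀ : X) : StateForm Ag At X :=
  .exq x (.bind {a} x (Box p (.pand
    (.ofState (.exq x₀ (.bind {a} x₀ (.pnext (.ofState (.atom p))))))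
    (.ofState (.exq x₀ (.bind {a} x₀ (.pnext (.pnot (.ofState (.atom p))))))))))

/-- ψ7 = ψ8 := ⟨⟨x₁⟩⟩(a,x₁)□⟨⟨x₂⟩⟩(a,x₂)∘p. -/
def psi78 (a : Ag) (p : At) (x₁ x₂ : X) : StateForm Ag At X :=
  .exq x₁ (.bind {a} x₁ (Box p
    (.ofState (.exq x₂ (.bind {a} x₂ (.pnext (.ofState (.atom p))))))))

mutual
/-- Polarity check: `pol = true` means positive polarity; every ⟨⟨x⟩⟩ must
    occur positively. -/
def ExS (pol : Bool) : StateForm Ag At X → Prop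
  | .atom _ => True
  | .snot φ => ExS (!pol) φ
  | .sand φ₁ φ₂ => ExS pol φ₁ ∧ ExS pol φ₂
  | .exq _ φ => pol = true ∧ ExS pol φ
  | .bind _ _ ψ => ExP pol ψ
  | .unbind _ _ ψ => ExP pol ψ
def ExP (pol : Bool) : PathForm Ag At X → Prop
  | .ofState φ => ExS pol φ
  | .pnot ψ => ExP (!pol) ψ
  | .pand ψ₁ ψ₂ => ExP pol ψ₁ ∧ ExP pol ψ₂
  | .puntil ψ₁ ψ₂ => ExP pol ψ₁ ∧ ExP pol ψ₂
  | .pnext ψ => ExP pol ψ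
end

/-- An existential SL formula: every occurrence of ⟨⟨x⟩⟩ occurs positively. -/
def Existential (φ : StateForm Ag At X) : Prop := ExS true φ

/-- The structure M1. -/
noncomputable def M1 : NATS Unit (Fin 3) Unit where
  v := fun s => {_u : Unit | s = 1}
  Ch := fun _ s => if s = 0 then {{0}, {1}} else {{2}}
  Ch_nonempty := by
    intro a s
    try dsimp only
    split
    · exact ⟨{0}, by simp⟩
    · exact ⟨{2}, by simp⟩
  Ch_inter := by
    intro a₁ a₂ h
    exact absurd (Subsingleton.elim a₁ a₂) h

/-- The structure M2. -/
noncomputable def M2 : NATS Unit (Fin 3) Unit where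
  v := fun s => {_u : Unit | s = 1}
  Ch := fun _ s =>
    if s = 0 then {{0, 1}, {1}, {0}} else if s = 1 then {{0, 1}, {1}, {0, 2}} else {{2}}
  Ch_nonempty := by
    intro a s
    try dsimp only
    split
    · exact ⟨{0, 1}, by simp⟩
    · split
      · exact ⟨{0, 1}, by simp⟩
      · exact ⟨{2}, by simp⟩
  Ch_inter := by
    intro a₁ a₂ h
    exact absurd (Subsingleton.elim a₁ a₂) h

/-- The binary-tree NATS T_L over {0,1}*, with p true exactly on L. -/
def treeNATS (L : Set (List Bool)) : NATS Unit (List Bool) Unit where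
  v := fun w => {_u : Unit | w ∈ L}
  Ch := fun _ w => {{w ++ [false]}, {w ++ [true]}}
  Ch_nonempty := fun _ w => ⟨{w ++ [false]}, by simp⟩
  Ch_inter := by
    intro a₁ a₂ h
    exact absurd (Subsingleton.elim a₁ a₂) h
/-- First-order formulas over the signature (S₀, S₁, P, X₁, …, X_n) of binary trees,
    with n unary second-order variables; first-order variables are indexed by ℕ. -/
inductive FO (n : ℕ) : Type where
  | eq (i j : ℕ)
  | s0 (i j : ℕ)
  | s1 (i j : ℕ)
  | pre (i : ℕ)
  | svar (k : Fin n) (i : ℕ)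
  | fnot (θ : FO n)
  | fand (θ₁ θ₂ : FO n)
  | fex (i : ℕ) (θ : FO n)

/-- Satisfaction of a first-order formula in the binary tree ({0,1}*, S₀, S₁, L),
    with second-order parameters Xs and first-order valuation val. -/
noncomputable def FO.Sat {n : ℕ} (L : Set (List Bool)) (Xs : Fin n → Set (List Bool))
    (val : ℕ → List Bool) : FO n → Prop
  | .eq i j => val i = val j
  | .s0 i j => val j = val i ++ [false]
  | .s1 i j => val j = val i ++ [true]
  | .pre i => val i ∈ L
  | .svar k i => val i ∈ Xs k
  | .fnot θ => ¬ FO.Sat L Xs val θ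
  | .fand θ₁ θ₂ => FO.Sat L Xs val θ₁ ∧ FO.Sat L Xs val θ₂
  | .fex i θ => ∃ w : List Bool, FO.Sat L Xs (Function.update val i w) θ

/-- Free first-order variables of a first-order formula. -/
def FO.free {n : ℕ} : FO n → Set ℕ
  | .eq i j => {i, j}
  | .s0 i j => {i, j}
  | .s1 i j => {i, j}
  | .pre i => {i}
  | .svar _ i => {i}
  | .fnot θ => θ.free
  | .fand θ₁ θ₂ => θ₁.free ∪ θ₂.free
  | .fex i θ => θ.free \ {i}

/-- Satisfaction of the Σ¹₁ sentence ∃X₁…∃X_n θ in the binary tree determined by L. -/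
noncomputable def Sigma11Sat (L : Set (List Bool)) (n : ℕ) (θ : FO n) : Prop :=
  ∃ Xs : Fin n → Set (List Bool), FO.Sat L Xs (fun _ => []) θ

/-- unbind(A, y₁) … unbind(A, y_k) ψ for the list l = [y₁, …, y_k]. -/
def unbindSeq (A : Set Ag) (l : List X) (ψ : PathForm Ag At X) : PathForm Ag At X :=
  l.foldr (fun y ψ' => .ofState (.unbind A y ψ')) ψ

mutual
/-- Translation of SL formulas into USL: each binder (A, x) is replaced by the
    sequence of unbinders of A from every variable in the list l, followed by (A, x). -/
def tS (l : List X) : StateForm Ag At X → StateForm Ag At X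
  | .atom p => .atom p
  | .snot φ => .snot (tS l φ)
  | .sand φ₁ φ₂ => .sand (tS l φ₁) (tS l φ₂)
  | .exq x φ => .exq x (tS l φ)
  | .bind A x ψ =>
      match l with
      | [] => .bind A x (tP l ψ)
      | y :: ys => .unbind A y (unbindSeq A ys (.ofState (.bind A x (tP l ψ))))
  | .unbind A x ψ => .unbind A x (tP l ψ)
def tP (l : List X) : PathForm Ag At X → PathForm Ag At X
  | .ofState φ => .ofState (tS l φ)
  | .pnot ψ => .pnot (tP l ψ)
  | .pand ψ₁ ψ₂ => .pand (tP l ψ₁) (tP l ψ₂)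
  | .puntil ψ₁ ψ₂ => .puntil (tP l ψ₁) (tP l ψ₂)
  | .pnext ψ => .pnext (tP l ψ)
end
mutual
/-- Substitution replacing every occurrence of the subformula p by p ∧ G and every
    occurrence of ¬p by ¬p ∧ G. -/
def gsubS (G : PathForm Ag At X) : StateForm Ag At X → StateForm Ag At X
  | .atom q => .atom q
  | .snot φ => .snot (gsubS G φ)
  | .sand φ₁ φ₂ => .sand (gsubS G φ₁) (gsubS G φ₂)
  | .exq x φ => .exq x (gsubS G φ)
  | .bind A x ψ => .bind A x (gsubP G ψ)
  | .unbind A x ψ => .unbind A x (gsubP G ψ)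
def gsubP (G : PathForm Ag At X) : PathForm Ag At X → PathForm Ag At X
  | .ofState (.atom q) => .pand (.ofState (.atom q)) G
  | .pnot (.ofState (.atom q)) => .pand (.pnot (.ofState (.atom q))) G
  | .ofState φ => .ofState (gsubS G φ)
  | .pnot ψ => .pnot (gsubP G ψ)
  | .pand ψ₁ ψ₂ => .pand (gsubP G ψ₁) (gsubP G ψ₂)
  | .puntil ψ₁ ψ₂ => .puntil (gsubP G ψ₁) (gsubP G ψ₂)
  | .pnext ψ => .pnext (gsubP G ψ)
end

/-- The guard formula □(⟨⟨v⟩⟩(a,v)∘p ∧ ⟨⟨v⟩⟩(a,v)∘¬p) over the single agent and atom. -/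
def guardForm (v : ℕ) : PathForm Unit Unit ℕ :=
  Box () (.pand
    (.ofState (.exq v (.bind {()} v (.pnext (.ofState (.atom ()))))))
    (.ofState (.exq v (.bind {()} v (.pnext (.pnot (.ofState (.atom ()))))))))

/-- The family Γ_i of SL sentences (variable x is coded by 0 and x_i by i + 1). -/
def Gamma : ℕ → StateForm Unit Unit ℕ
  | 0 => psi9 () () 0 1
  | i + 1 => gsubS (guardForm (i + 2)) (Gamma i)
/-- A concurrent game structure (labeling and transition function). -/
structure CGS (Ag St At Ac : Type) where
  v : St → Set At
  tr : St → (Ag → Ac) → St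

/-- SL formulas (over CGS), as in Mogavero–Murano–Vardi. -/
inductive SLForm (Ag At X : Type) : Type where
  | atom (p : At)
  | fnot (φ : SLForm Ag At X)
  | fand (φ₁ φ₂ : SLForm Ag At X)
  | fnext (φ : SLForm Ag At X)
  | funtil (φ₁ φ₂ : SLForm Ag At X)
  | exq (x : X) (φ : SLForm Ag At X)
  | allq (x : X) (φ : SLForm Ag At X)
  | bind (a : Ag) (x : X) (φ : SLForm Ag At X)

/-- A CGS strategy: a function from tracks (history, current state) to actions. -/
def CGSStrat (St Ac : Type) : Type := List St → St → Ac

/-- Translation of a CGS strategy by a track prefix. -/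
def CGSStrat.shift (σ : CGSStrat St Ac) (τ : List St) : CGSStrat St Ac :=
  fun h s => σ (τ ++ h) s

/-- Auxiliary: (current state, history) of the unique play determined by one
    strategy per agent. -/
def playAux {Ac : Type} (G : CGS Ag St At Ac) (α : Ag → CGSStrat St Ac) (s : St) :
    ℕ → St × List St
  | 0 => (s, [])
  | n + 1 =>
      let q := playAux G α s n
      (G.tr q.1 (fun a => α a q.2 q.1), q.2 ++ [q.1])

/-- The unique play determined by the strategies assigned to all agents. -/
def play {Ac : Type} (G : CGS Ag St At Ac) (α : Ag → CGSStrat St Ac) (s : St) (n : ℕ) : St :=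
  (playAux G α s n).1

/-- SL satisfaction over a CGS, with a partial assignment χ of strategies to
    variables and a (total) assignment α of strategies to agents. -/
noncomputable def SLSatCGS {Ac : Type} (G : CGS Ag St At Ac) :
    (X → Option (CGSStrat St Ac)) → (Ag → CGSStrat St Ac) → St → SLForm Ag At X → Prop
  | _, _, s, .atom p => p ∈ G.v s
  | χ, α, s, .fnot φ => ¬ SLSatCGS G χ α s φ
  | χ, α, s, .fand φ₁ φ₂ => SLSatCGS G χ α s φ₁ ∧ SLSatCGS G χ α s φ₂
  | χ, α, s, .exq x φ => ∃ σ : CGSStrat St Ac, SLSatCGS G (Function.update χ x (some σ)) α s φ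
  | χ, α, s, .allq x φ => ∀ σ : CGSStrat St Ac, SLSatCGS G (Function.update χ x (some σ)) α s φ
  | χ, α, s, .bind a x φ => SLSatCGS G χ (Function.update α a ((χ x).getD (α a))) s φ
  | χ, α, s, .fnext φ =>
      SLSatCGS G (fun y => (χ y).map (fun σ => σ.shift [s])) (fun b => (α b).shift [s])
        (play G α s 1) φ
  | χ, α, s, .funtil φ₁ φ₂ => ∃ i : ℕ,
      SLSatCGS G (fun y => (χ y).map (fun σ => σ.shift ((List.range i).map (play G α s))))
        (fun b => (α b).shift ((List.range i).map (play G α s))) (play G α s i) φ₂ ∧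
      ∀ j < i,
        SLSatCGS G (fun y => (χ y).map (fun σ => σ.shift ((List.range j).map (play G α s))))
          (fun b => (α b).shift ((List.range j).map (play G α s))) (play G α s j) φ₁

/-- Free agents of an SL formula (temporal operators free all agents; a binder
    (a, x) binds agent a). -/
def SLForm.freeAg : SLForm Ag At X → Set Ag
  | .atom _ => ∅
  | .fnot φ => φ.freeAg
  | .fand φ₁ φ₂ => φ₁.freeAg ∪ φ₂.freeAg
  | .fnext _ => Set.univ
  | .funtil _ _ => Set.univ
  | .exq _ φ => φ.freeAg
  | .allq _ φ => φ.freeAg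
  | .bind a _ φ => φ.freeAg \ {a}

/-- Free variables of an SL formula. -/
noncomputable def SLForm.freeVr : SLForm Ag At X → Set X
  | .atom _ => ∅
  | .fnot φ => φ.freeVr
  | .fand φ₁ φ₂ => φ₁.freeVr ∪ φ₂.freeVr
  | .fnext φ => φ.freeVr
  | .funtil φ₁ φ₂ => φ₁.freeVr ∪ φ₂.freeVr
  | .exq x φ => φ.freeVr \ {x}
  | .allq x φ => φ.freeVr \ {x}
  | .bind a x φ => if a ∈ φ.freeAg then φ.freeVr ∪ {x} else φ.freeVr

/-- An SL sentence: no free agent and no free variable. -/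
def SLForm.IsSentence (φ : SLForm Ag At X) : Prop := φ.freeAg = ∅ ∧ φ.freeVr = ∅

/-- Truth of an SL sentence at a state of a CGS: with the empty assignment of
    variables (and any assignment of agents, which is irrelevant for sentences). -/
noncomputable def SLTrueCGS {Ac : Type} (G : CGS Ag St At Ac) (s : St)
    (φ : SLForm Ag At X) : Prop :=
  ∀ α : Ag → CGSStrat St Ac, SLSatCGS G (fun _ => none) α s φ

/-! A witness σ for x₁ must, along every play it allows, keep offering a `p`-state
as the next move, since otherwise the nested binder on x₂ could not reach `p` (x₁ stays bound and
has priority). In M1, σ can offer `p` at s₀ only by choosing {s₁}, which forces the play to s₁,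
where the only choice is {s₂}. -/

section Paths

variable {St : Type}

/-- (history, current state) of the path generated by a history-dependent successor function. -/
def genPathAux (f : List St → St → St) (s : St) : ℕ → List St × St
  | 0 => ([], s)
  | n + 1 => let q := genPathAux f s n; (q.1 ++ [q.2], f q.1 q.2)

def genPath (f : List St → St → St) (s : St) (n : ℕ) : St := (genPathAux f s n).2

theorem histOf_genPath (f : List St → St → St) (s : St) (n : ℕ) :
    histOf (genPath f s) n = (genPathAux f s n).1 := by
  induction n with
  | zero => rfl
  | succ n ih =>
    rw [histOf, List.range_succ, List.map_append, ← histOf, ih]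
    rfl

theorem genPath_succ (f : List St → St → St) (s : St) (n : ℕ) :
    genPath f s (n + 1) = f (histOf (genPath f s) n) (genPath f s n) := by
  rw [histOf_genPath]
  rfl

end Paths

section Context

variable {M : NATS Ag St At} {μ : M.Assignment X}

theorem ctxFun_cons_subset (A : Set Ag) (x : X) (κ : Commitment Ag X) (h : List St) (s : St) :
    ctxFun μ ((A, x) :: κ) h s ⊆ ctxFun μ κ h s := by
  simp only [ctxFun]
  split_ifs
  exacts [Set.inter_subset_left, subset_rfl]

theorem ctxFun_cons_nonempty (A : Set Ag) (x : X) {κ : Commitment Ag X} {h : List St} {s : St}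
    (hκ : (ctxFun μ κ h s).Nonempty) : (ctxFun μ ((A, x) :: κ) h s).Nonempty := by
  simp only [ctxFun]
  split_ifs with hA
  exacts [hA, hκ]

theorem bindChoice_singleton {x : X} {σ : M.Strategy} (hx : μ x = some σ) (a : Ag)
    (h : List St) (s : St) : bindChoice μ {a} x h s = σ.f a h s := by
  simp [bindChoice, hx]

theorem ctxFun_singleton {x : X} {σ : M.Strategy} (hx : μ x = some σ) {a : Ag} {h : List St}
    {s : St} (hne : (σ.f a h s).Nonempty) : ctxFun μ [({a}, x)] h s = σ.f a h s := by
  simp [ctxFun, bindChoice_singleton hx, hne]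

/-- The oldest binding of a commitment has priority: it confines the context to its choice. -/
theorem ctxFun_append_singleton {x : X} {σ : M.Strategy} (hx : μ x = some σ) {a : Ag}
    (hne : ∀ s, ∀ c ∈ M.Ch a s, c.Nonempty) (κ : Commitment Ag X) (h : List St) (s : St) :
    ctxFun μ (κ ++ [({a}, x)]) h s ⊆ σ.f a h s ∧ (ctxFun μ (κ ++ [({a}, x)]) h s).Nonempty := by
  induction κ with
  | nil =>
    rw [List.nil_append, ctxFun_singleton hx (hne s _ (σ.valid a h s))]
    exact ⟨subset_rfl, hne s _ (σ.valid a h s)⟩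
  | cons b κ ih =>
    exact ⟨(ctxFun_cons_subset b.1 b.2 _ h s).trans ih.1, ctxFun_cons_nonempty b.1 b.2 ih.2⟩

end Context

section Outcomes

variable [Subsingleton Ag] {M : NATS Ag St At} {μ : M.Assignment X}

theorem NATS.step_of_mem_strategy (σ : M.Strategy) {a : Ag} {h : List St} {t t' : St}
    (ht : t' ∈ σ.f a h t) : M.Step t t' := fun b =>
  Subsingleton.elim a b ▸ ⟨σ.f a h t, σ.valid a h t, ht⟩

theorem outcomes_append_singleton_nonempty {x : X} {σ : M.Strategy} (hx : μ x = some σ)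
    {a : Ag} (hne : ∀ s, ∀ c ∈ M.Ch a s, c.Nonempty) (κ : Commitment Ag X) (s : St) :
    (outcomes M μ (κ ++ [({a}, x)]) s).Nonempty := by
  choose f hf using fun h t => (ctxFun_append_singleton hx hne κ h t).2
  refine ⟨genPath f s, fun n => ?_, rfl, fun n => ?_⟩ <;> rw [genPath_succ]
  · exact NATS.step_of_mem_strategy σ ((ctxFun_append_singleton hx hne κ _ _).1 (hf _ _))
  · exact hf _ _

end Outcomes

section Satisfaction

variable {M : NATS Ag St At} {μ : M.Assignment X} {κ : Commitment Ag X}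

theorem SatP_pTop (p : At) (lam : ℕ → St) : SatP M μ κ lam (pTop p) := by
  simp only [pTop, SatP, SatS]
  tauto

theorem SatP_box_iff (p : At) (ψ : PathForm Ag At X) (lam : ℕ → St) :
    SatP M μ κ lam (Box p ψ) ↔
      ∀ i, SatP M (μ.shift (histOf lam i)) κ (fun n => lam (n + i)) ψ := by
  simp [Box, SatP, SatP_pTop]

theorem exists_mem_ctxFun_of_satS_bind_next {A : Set Ag} {y : X} {s : St} {p : At}
    (hout : (outcomes M μ ((A, y) :: κ) s).Nonempty)
    (h : SatS M μ κ s (.bind A y (.pnext (.ofState (.atom p))))) :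
    ∃ t ∈ ctxFun μ ((A, y) :: κ) [] s, p ∈ M.v t := by
  obtain ⟨lam, hlam⟩ := hout
  have hnext := hlam.2.2 0
  rw [hlam.2.1] at hnext
  exact ⟨lam 1, hnext, h lam hlam⟩

theorem exists_play_of_uslTrue_psi78 [Subsingleton Ag] {a : Ag} {p : At} {x₁ x₂ : X}
    (hx : x₁ ≠ x₂) (hne : ∀ s, ∀ c ∈ M.Ch a s, c.Nonempty) {s : St}
    (h : USLTrue M s (psi78 a p x₁ x₂)) :
    ∃ σ : M.Strategy, ∃ lam : ℕ → St, lam 0 = s ∧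
      (∀ n, lam (n + 1) ∈ σ.f a (histOf lam n) (lam n)) ∧
      ∀ i, ∃ t ∈ σ.f a (histOf lam i) (lam i), p ∈ M.v t := by
  obtain ⟨σ, hσ⟩ := h
  set μ : M.Assignment X := Function.update (emptyAsg M X) x₁ (some σ)
  have hμ : μ x₁ = some σ := Function.update_self ..
  obtain ⟨lam, hlam⟩ := outcomes_append_singleton_nonempty hμ hne [] s
  refine ⟨σ, lam, hlam.2.1,
    fun n => (ctxFun_append_singleton hμ hne [] _ _).1 (hlam.2.2 n), fun i => ?_⟩
  obtain ⟨σ₂, hσ₂⟩ := (SatP_box_iff p _ lam).1 (hσ lam hlam) i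
  have hν : Function.update (μ.shift (histOf lam i)) x₂ (some σ₂) x₁ =
      some (σ.shift (histOf lam i)) :=
    (Function.update_of_ne hx _ _).trans (congrArg (Option.map _) hμ)
  obtain ⟨t, ht, hp⟩ := exists_mem_ctxFun_of_satS_bind_next
    (outcomes_append_singleton_nonempty hν hne [({a}, x₂)] _) hσ₂
  refine ⟨t, ?_, hp⟩
  simpa [NATS.Strategy.shift] using (ctxFun_append_singleton hν hne [({a}, x₂)] _ _).1 ht

end Satisfaction

theorem M1_choice_nonempty : ∀ s, ∀ c ∈ M1.Ch () s, c.Nonempty := by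
  intro s c hc
  simp only [M1] at hc
  split_ifs at hc <;> aesop

theorem M1_not_always_offers_p (σ : M1.Strategy) {lam : ℕ → Fin 3} (h0 : lam 0 = 0)
    (hlam : ∀ n, lam (n + 1) ∈ σ.f () (histOf lam n) (lam n)) :
    ¬ ∀ i, ∃ t ∈ σ.f () (histOf lam i) (lam i), () ∈ M1.v t := by
  intro hp
  have offers_p_at : ∀ i, ∃ t ∈ σ.f () (histOf lam i) (lam i), t = 1 := hp
  have hch0 : σ.f () (histOf lam 0) 0 = {0} ∨ σ.f () (histOf lam 0) 0 = {1} := by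
    simpa [M1] using σ.valid () (histOf lam 0) 0
  have hch1 : σ.f () (histOf lam 1) 1 = {2} := by simpa [M1] using σ.valid () (histOf lam 1) 1
  obtain ⟨t₀, ht₀, rfl⟩ := offers_p_at 0
  rw [h0] at ht₀
  have hlam1 : lam 1 = 1 := by
    rcases hch0 with hc | hc <;> rw [hc] at ht₀
    · exact absurd ht₀ (by decide)
    · simpa [h0, hc] using hlam 0
  obtain ⟨t₁, ht₁, rfl⟩ := offers_p_at 1
  rw [hlam1, hch1] at ht₁
  exact absurd ht₁ (by decide)

/-- in M1, the USL sentence ψ8 = ⟨⟨x₁⟩⟩(a,x₁)□⟨⟨x₂⟩⟩(a,x₂)∘p is false at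
state s₀. -/
theorem psi8_false_in_M1 :
    ¬ USLTrue M1 (0 : Fin 3) (psi78 () () true false) := by
  intro h
  obtain ⟨σ, lam, h0, hlam, hp⟩ :=
    exists_play_of_uslTrue_psi78 (by decide) M1_choice_nonempty h
  exact M1_not_always_offers_p σ h0 hlam hp

end USL
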